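/- Let E be a real Hilbert space, f : E → ℝ convex and differentiable with L-Lipschitz gradient (L > 0), and g : E → ℝ convex and lower semicontinuous. Fix λ ∈ (0, 1/L], let x* be a minimizer of f + g, and define the proximal gradient iterates by x_{k+1} = prox_{λg}(x_k − λ∇f(x_k)). Then for all k ≥ 1, (f + g)(x_k) − (f + g)(x*) ≤ ‖x₀ − x*‖² / (2λk); in particular the objective error decays as O(1/k). -/

import Mathlib

open scoped RealInnerProductSpace

/-!
For every `z`, one proximal gradient step satisfies
`F (x (k+1)) + ‖x (k+1) - z‖² / (2λ) ≤ F z + ‖x k - z‖² / (2λ)`, where `F = f + g`: add the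
first-order convexity inequality for `f` at `x k`, the descent lemma for the `L`-smooth `f`
(where `λ L ≤ 1` lets `‖·‖² / (2λ)` absorb the curvature term), and the optimality inequality of the
prox step. With `z = x k` this shows that `F (x k)` is nonincreasing; with `z = x*` the distance
terms telescope, so `k (F (x k) - F x*) ≤ ∑_{i<k} (F (x (i+1)) - F x*) ≤ ‖x 0 - x*‖² / (2λ)`.
-/

section ProxGradient

open Set Filter Topology AffineMap

variable {E : Type*} [NormedAddCommGroup E] [InnerProductSpace ℝ E]

theorem ConvexOn.le_add_inner_of_isMinOn_add_sq {s : Set E} {g : E → ℝ} (hg : ConvexOn ℝ s g)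
    {c : ℝ} {v p z : E} (hp : IsMinOn (fun y => g y + c * ‖y - v‖ ^ 2) s p) (hps : p ∈ s)
    (hz : z ∈ s) : g p ≤ g z + 2 * c * ⟪p - v, z - p⟫ := by
  set I := ⟪p - v, z - p⟫
  set N := ‖z - p‖ ^ 2
  -- compare `p` with the points of the segment `[p, z]` and let them tend to `p`
  have hseg : ∀ t ∈ Ioc (0 : ℝ) 1, g p ≤ g z + 2 * c * I + t * (c * N) := by
    rintro t ⟨ht0, ht1⟩
    set q := (1 - t) • p + t • z
    have hq : q ∈ s := hg.1 hps hz (by linarith) ht0.le (by ring)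
    have hconv : g q ≤ (1 - t) * g p + t * g z := by
      simpa only [smul_eq_mul] using hg.2 hps hz (by linarith) ht0.le (by ring)
    have hmin : g p + c * ‖p - v‖ ^ 2 ≤ g q + c * ‖q - v‖ ^ 2 := hp hq
    have hexp : ‖q - v‖ ^ 2 = ‖p - v‖ ^ 2 + 2 * t * I + t ^ 2 * N := by
      have : q - v = (p - v) + t • (z - p) := by
        simp only [q, sub_smul, one_smul, smul_sub]; abel
      rw [this, norm_add_sq_real, real_inner_smul_right, norm_smul, mul_pow,
        Real.norm_of_nonneg ht0.le]
      ring
    have : t * g p ≤ t * (g z + 2 * c * I + t * (c * N)) := by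
      rw [hexp] at hmin; linarith
    exact le_of_mul_le_mul_left this ht0
  have hlim : Tendsto (fun t : ℝ => g z + 2 * c * I + t * (c * N)) (𝓝[>] 0)
      (𝓝 (g z + 2 * c * I)) :=
    ((continuous_const.add (continuous_id.mul continuous_const)).tendsto' 0 _
      (by simp)).mono_left nhdsWithin_le_nhds
  exact ge_of_tendsto hlim (eventually_of_mem (Ioc_mem_nhdsGT zero_lt_one) hseg)

variable [CompleteSpace E]

theorem HasGradientAt.hasDerivAt_comp_lineMap {f : E → ℝ} {f' x y : E} {t : ℝ}
    (h : HasGradientAt f f' (lineMap x y t)) :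
    HasDerivAt (fun s => f (lineMap x y s)) ⟪f', y - x⟫ t := by
  have := h.hasFDerivAt.comp_hasDerivAt t hasDerivAt_lineMap
  rwa [InnerProductSpace.toDual_apply_apply] at this

theorem ConvexOn.add_inner_le_of_hasGradientAt {s : Set E} {f : E → ℝ} {f' x z : E}
    (hf : ConvexOn ℝ s f) (hx : x ∈ s) (hz : z ∈ s) (h : HasGradientAt f f' x) :
    f x + ⟪f', z - x⟫ ≤ f z := by
  have hline := (hf.comp_affineMap (lineMap x z)).le_slope_of_hasDerivAt
    (x := 0) (y := 1) (by simpa) (by simpa) one_pos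
    (HasGradientAt.hasDerivAt_comp_lineMap (by simpa using h))
  simp only [slope_def_field, Function.comp_def, lineMap_apply_zero, lineMap_apply_one] at hline
  linarith

theorem le_add_inner_add_sq_of_lipschitz_gradient {f : E → ℝ} {f' : E → E} {L : ℝ}
    (hf : ∀ x, HasGradientAt f (f' x) x) (hlip : ∀ x y, ‖f' x - f' y‖ ≤ L * ‖x - y‖)
    (x y : E) : f y ≤ f x + ⟪f' x, y - x⟫ + L / 2 * ‖y - x‖ ^ 2 := by
  set d := y - x
  set ψ : ℝ → ℝ := fun t => f (lineMap x y t) - t * ⟪f' x, d⟫ - L / 2 * t ^ 2 * ‖d‖ ^ 2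
  have hψ : ∀ t, HasDerivAt ψ (⟪f' (lineMap x y t) - f' x, d⟫ - L * t * ‖d‖ ^ 2) t := by
    intro t
    have := (((hf (lineMap x y t)).hasDerivAt_comp_lineMap).sub
      ((hasDerivAt_id t).mul_const ⟪f' x, d⟫)).sub
      (((hasDerivAt_pow 2 t).const_mul (L / 2)).mul_const (‖d‖ ^ 2))
    refine this.congr_deriv ?_
    rw [inner_sub_left]
    ring
  have hanti : AntitoneOn ψ (Ici 0) := by
    refine antitoneOn_of_hasDerivWithinAt_nonpos (convex_Ici 0)
      (fun t _ => (hψ t).continuousAt.continuousWithinAt)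
      (fun t _ => (hψ t).hasDerivWithinAt) fun t ht => ?_
    rw [interior_Ici] at ht
    have hnorm : ‖lineMap x y t - x‖ = t * ‖d‖ := by
      rw [← vsub_eq_sub, lineMap_vsub_left, norm_smul, Real.norm_of_nonneg ht.out.le]; rfl
    have hbound : ⟪f' (lineMap x y t) - f' x, d⟫ ≤ L * t * ‖d‖ ^ 2 := calc
      _ ≤ ‖f' (lineMap x y t) - f' x‖ * ‖d‖ := real_inner_le_norm _ _
      _ ≤ L * ‖lineMap x y t - x‖ * ‖d‖ := by gcongr; exact hlip _ _
      _ = L * t * ‖d‖ ^ 2 := by rw [hnorm]; ring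
    linarith
  have h01 := hanti self_mem_Ici (mem_Ici.2 zero_le_one) zero_le_one
  simp only [ψ, lineMap_apply_zero, lineMap_apply_one] at h01
  linarith

theorem prox_grad_step {f g : E → ℝ} {f' : E → E} {L lam : ℝ} (hf : ConvexOn ℝ univ f)
    (hdiff : ∀ x, HasGradientAt f (f' x) x) (hlip : ∀ x y, ‖f' x - f' y‖ ≤ L * ‖x - y‖)
    (hg : ConvexOn ℝ univ g) (hlam : 0 < lam) (hLlam : L * lam ≤ 1) {x p : E}
    (hp : IsMinOn (fun z => g z + 1 / (2 * lam) * ‖z - (x - lam • f' x)‖ ^ 2) univ p) (z : E) :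
    f p + g p + 1 / (2 * lam) * ‖p - z‖ ^ 2 ≤ f z + g z + 1 / (2 * lam) * ‖x - z‖ ^ 2 := by
  set c := 1 / (2 * lam)
  have hc : 2 * c * lam = 1 := by simp only [c]; field_simp
  have hLc : L / 2 ≤ c := by
    rw [le_div_iff₀ (by positivity)]; linarith
  have hconv := hf.add_inner_le_of_hasGradientAt (mem_univ x) (mem_univ z) (hdiff x)
  have hdesc := le_add_inner_add_sq_of_lipschitz_gradient hdiff hlip x p
  have hprox := hg.le_add_inner_of_isMinOn_add_sq hp (mem_univ p) (mem_univ z)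
  have hinner : 2 * c * ⟪p - (x - lam • f' x), z - p⟫
      = 2 * c * ⟪p - x, z - p⟫ + ⟪f' x, z - x⟫ - ⟪f' x, p - x⟫ := by
    have : z - p = (z - x) - (p - x) := by abel
    rw [show p - (x - lam • f' x) = (p - x) + lam • f' x by abel, inner_add_left,
      real_inner_smul_left, this, inner_sub_right (x := f' x)]
    linear_combination (⟪f' x, z - x⟫ - ⟪f' x, p - x⟫) * hc
  have hpyth : ‖x - z‖ ^ 2 = ‖p - x‖ ^ 2 + 2 * ⟪p - x, z - p⟫ + ‖p - z‖ ^ 2 := by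
    rw [show x - z = -((p - x) + (z - p)) by abel, norm_neg, norm_add_sq_real, norm_sub_rev z p]
  have hsq : L / 2 * ‖p - x‖ ^ 2 ≤ c * ‖p - x‖ ^ 2 := by gcongr
  rw [hinner] at hprox
  linear_combination hconv + hdesc + hprox + hsq - c * hpyth

end ProxGradient

theorem Antitone.natCast_mul_sub_le {φ d : ℕ → ℝ} {a : ℝ} (hφ : Antitone φ)
    (hstep : ∀ k, φ (k + 1) - a ≤ d k - d (k + 1)) (k : ℕ) :
    k * (φ k - a) ≤ d 0 - d k := by
  induction k with
  | zero => simp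
  | succ k ih =>
    have := hφ k.le_succ
    push_cast
    linear_combination ih + hstep k + (k : ℝ) * this

theorem prox_grad_objective_convergence_general
    {E : Type*} [NormedAddCommGroup E] [InnerProductSpace ℝ E] [CompleteSpace E]
    (f g : E → ℝ) (f' : E → E) (L lam : ℝ)
    (hf : ConvexOn ℝ Set.univ f)
    (hdiff : ∀ x : E, HasGradientAt f (f' x) x)
    (hlip : ∀ x y : E, ‖f' x - f' y‖ ≤ L * ‖x - y‖)
    (hg : ConvexOn ℝ Set.univ g)
    (hlam : lam ∈ Set.Ioc 0 (1 / L))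
    (xstar : E)
    (x : ℕ → E)
    (hiter : ∀ (k : ℕ) (z : E),
      g (x (k + 1)) + (1 / (2 * lam)) * ‖x (k + 1) - (x k - lam • f' (x k))‖ ^ 2
        ≤ g z + (1 / (2 * lam)) * ‖z - (x k - lam • f' (x k))‖ ^ 2) :
    ∀ k : ℕ, 1 ≤ k →
      (f (x k) + g (x k)) - (f xstar + g xstar) ≤ ‖x 0 - xstar‖ ^ 2 / (2 * lam * k) := by
  obtain ⟨hlam0, hlamL⟩ := hlam
  have hL : 0 < L := one_div_pos.1 (hlam0.trans_le hlamL)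
  have hLlam : L * lam ≤ 1 := by rwa [le_div_iff₀' hL] at hlamL
  have hstep k := prox_grad_step hf hdiff hlip hg hlam0 hLlam (fun z _ => hiter k z)
  have hanti : Antitone fun k => f (x k) + g (x k) := antitone_nat_of_succ_le fun k => by
    have h := hstep k (x k)
    rw [sub_self, norm_zero] at h
    have : 0 ≤ 1 / (2 * lam) * ‖x (k + 1) - x k‖ ^ 2 := by positivity
    linarith
  intro k hk
  have hsum := hanti.natCast_mul_sub_le (a := f xstar + g xstar)
    (d := fun k => 1 / (2 * lam) * ‖x k - xstar‖ ^ 2) (fun k => by linarith [hstep k xstar]) k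
  have hdk : 0 ≤ 1 / (2 * lam) * ‖x k - xstar‖ ^ 2 := by positivity
  rw [le_div_iff₀ (by positivity)]
  calc _ = 2 * lam * (k * (f (x k) + g (x k) - (f xstar + g xstar))) := by ring
    _ ≤ 2 * lam * (1 / (2 * lam) * ‖x 0 - xstar‖ ^ 2) :=
        mul_le_mul_of_nonneg_left (by linarith) (by positivity)
    _ = ‖x 0 - xstar‖ ^ 2 := by field_simp

/-- `O(1/k)` objective convergence of proximal gradient descent in the convex case. -/
theorem prox_grad_objective_convergence
    {E : Type*} [NormedAddCommGroup E] [InnerProductSpace ℝ E] [CompleteSpace E]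
    (f g : E → ℝ) (f' : E → E) (L lam : ℝ) (hL : 0 < L)
    (hf : ConvexOn ℝ Set.univ f)
    (hdiff : ∀ x : E, HasGradientAt f (f' x) x)
    (hlip : ∀ x y : E, ‖f' x - f' y‖ ≤ L * ‖x - y‖)
    (hg : ConvexOn ℝ Set.univ g) (hglsc : LowerSemicontinuous g)
    (hlam : lam ∈ Set.Ioc 0 (1 / L))
    (xstar : E) (hmin : ∀ z : E, f xstar + g xstar ≤ f z + g z)
    (x : ℕ → E)
    (hiter : ∀ (k : ℕ) (z : E),
      g (x (k + 1)) + (1 / (2 * lam)) * ‖x (k + 1) - (x k - lam • f' (x k))‖ ^ 2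
        ≤ g z + (1 / (2 * lam)) * ‖z - (x k - lam • f' (x k))‖ ^ 2) :
    ∀ k : ℕ, 1 ≤ k →
      (f (x k) + g (x k)) - (f xstar + g xstar) ≤ ‖x 0 - xstar‖ ^ 2 / (2 * lam * k) :=
  prox_grad_objective_convergence_general f g f' L lam hf hdiff hlip hg hlam xstar x hiter
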